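/- Let A be a unital Banach algebra and F : ℂ → A entire, and suppose F(λ + iβ) is invertible for all real λ, for two values β = β₁ and β = β₂ with β₁ < β₂. If F(λ)⁻¹ is meromorphic with finitely many poles in the strip β₁ < Im λ < β₂ (strip interpreted according to the relevant sign convention) and the residue at each pole is a finite-rank operator, then the contour integral (1/2πi)·tr ∮ F(λ)⁻¹ F′(λ) dλ over a contour enclosing all poles in the strip is a well-defined integer (the sum of the logarithmic residues). -/

import Mathlib

open scoped Real
open Metric Set Function Filter



private lemma aux_dslope_entire {f : ℂ → ℂ} (hf : Differentiable ℂ f) (z₀ : ℂ) :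
    Differentiable ℂ (dslope f z₀) := by
  intro z
  rcases eq_or_ne z z₀ with rfl | h
  · obtain ⟨p, hp⟩ := hf.analyticAt z
    exact hp.has_fpower_series_dslope_fslope.differentiableAt
  · exact (differentiableAt_dslope_of_ne h).mpr (hf z)

private lemma aux_iter_dslope_entire {f : ℂ → ℂ} (hf : Differentiable ℂ f) (z₀ : ℂ) :
    ∀ j : ℕ, Differentiable ℂ ((Function.swap dslope z₀)^[j] f) := by
  intro j
  induction j with
  | zero => exact hf
  | succ k ih =>
    rw [Function.iterate_succ_apply']
    exact aux_dslope_entire ih z₀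

private lemma aux_factor {f : ℂ → ℂ} (z₀ : ℂ) (m : ℕ)
    (h : ∀ j < m, (Function.swap dslope z₀)^[j] f z₀ = 0) :
    ∀ z, f z = (z - z₀) ^ m * ((Function.swap dslope z₀)^[m] f z) := by
  induction m with
  | zero => simp
  | succ k ih =>
    intro z
    have h1 : ∀ j < k, (Function.swap dslope z₀)^[j] f z₀ = 0 :=
      fun j hj => h j (hj.trans (Nat.lt_succ_self k))
    have hk0 : (Function.swap dslope z₀)^[k] f z₀ = 0 := h k (Nat.lt_succ_self k)
    have hs := sub_smul_dslope ((Function.swap dslope z₀)^[k] f) z₀ z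
    rw [hk0, sub_zero, smul_eq_mul] at hs
    rw [ih h1 z, Function.iterate_succ_apply', ← hs]
    ring

private lemma aux_deriv_entire {f : ℂ → ℂ} (hf : Differentiable ℂ f) :
    Differentiable ℂ (deriv f) := by
  have h : AnalyticOnNhd ℂ (deriv f) Set.univ :=
    (Complex.analyticOnNhd_univ_iff_differentiable.mpr hf).deriv
  exact fun z => (h z (Set.mem_univ z)).differentiableAt

private lemma aux_no_zeros {f : ℂ → ℂ} {c : ℂ} {R : ℝ} (hR : 0 ≤ R)
    (hf : Differentiable ℂ f) (hne : ∀ z ∈ closedBall c R, f z ≠ 0) :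
    (∮ z in C(c, R), deriv f z / f z) = 0 := by
  refine Complex.circleIntegral_eq_zero_of_differentiable_on_off_countable hR
    Set.countable_empty ?_ ?_
  · exact ((aux_deriv_entire hf).continuous.continuousOn).div
      (hf.continuous.continuousOn) hne
  · intro z hz
    exact ((aux_deriv_entire hf) z).div (hf z)
      (hne z (ball_subset_closedBall hz.1))

private lemma aux_arg_principle (c : ℂ) (R : ℝ) (hR : 0 < R) :
    ∀ (k : ℕ) (Z : Finset ℂ), Z.card ≤ k → ∀ (f : ℂ → ℂ), Differentiable ℂ f →
    (∀ z ∈ Metric.sphere c R, f z ≠ 0) → (↑Z ⊆ Metric.ball c R) →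
    (∀ z ∈ Metric.closedBall c R, f z = 0 → z ∈ Z) →
    ∃ m : ℤ, (∮ z in C(c, R), deriv f z / f z) = 2 * π * Complex.I * m := by
  intro k
  induction k with
  | zero =>
    intro Z hcard f hf hsph hZb hZ
    refine ⟨0, ?_⟩
    have hZ0 : Z = ∅ := Finset.card_eq_zero.mp (Nat.le_zero.mp hcard)
    rw [aux_no_zeros hR.le hf (fun z hz h0 => by simp [hZ0] at hZ; exact hZ z hz h0)]
    simp
  | succ k ih =>
    intro Z hcard f hf hsph hZb hZ
    by_cases hex : ∀ z ∈ closedBall c R, f z ≠ 0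
    · exact ⟨0, by rw [aux_no_zeros hR.le hf hex]; simp⟩
    push_neg at hex
    obtain ⟨z₀, hz₀cb, hz₀⟩ := hex
    have hz₀Z : z₀ ∈ Z := hZ z₀ hz₀cb hz₀
    have hz₀b : z₀ ∈ ball c R := hZb hz₀Z
    obtain ⟨p, hp⟩ := hf.analyticAt z₀
    -- the sphere point c + R where f ≠ 0
    have hcRsph : (c + R : ℂ) ∈ Metric.sphere c R := by
      simp [Complex.dist_eq, abs_of_pos hR]
    have hpne : p ≠ 0 := by
      intro h0
      have hev : ∀ᶠ z in nhds z₀, f z = 0 :=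
        HasFPowerSeriesAt.eventually_eq_zero (by rwa [h0] at hp)
      have hA : AnalyticOnNhd ℂ f Set.univ := Complex.analyticOnNhd_univ_iff_differentiable.mpr hf
      have := hA.eqOn_zero_of_preconnected_of_eventuallyEq_zero isPreconnected_univ
        (Set.mem_univ z₀) hev (Set.mem_univ (c + R : ℂ))
      exact hsph _ hcRsph this
    set m := p.order with hm
    set g := (Function.swap dslope z₀)^[m] f with hgdef
    have hgd : Differentiable ℂ g := aux_iter_dslope_entire hf z₀ m
    have hvan : ∀ j < m, (Function.swap dslope z₀)^[j] f z₀ = 0 := by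
      intro j hj
      have hj' := hp.has_fpower_series_iterate_dslope_fslope j
      have h1 : (Function.swap dslope z₀)^[j] f z₀ =
          (FormalMultilinearSeries.fslope^[j] p).coeff 0 := (hj'.coeff_zero 1).symm
      rw [h1, p.coeff_iterate_fslope]
      exact FormalMultilinearSeries.coeff_eq_zero.mpr (p.apply_eq_zero_of_lt_order (by simpa using hj))
    have hfact : ∀ z, f z = (z - z₀) ^ m * g z := aux_factor z₀ m hvan
    have hgz₀ : g z₀ ≠ 0 := hp.iterate_dslope_fslope_ne_zero hpne
    have hgsph : ∀ z ∈ Metric.sphere c R, g z ≠ 0 := by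
      intro z hz h0
      exact hsph z hz (by rw [hfact z, h0, mul_zero])
    have hZcard : (Z.erase z₀).card ≤ k := by
      have := Finset.card_erase_of_mem hz₀Z
      omega
    obtain ⟨m', hm'⟩ := ih (Z.erase z₀) hZcard g hgd hgsph
      (Set.Subset.trans (Finset.coe_subset.mpr (Finset.erase_subset z₀ Z)) hZb)
      (by
        intro w hw hw0
        refine Finset.mem_erase.mpr ⟨?_, hZ w hw (by rw [hfact w, hw0, mul_zero])⟩
        rintro rfl; exact hgz₀ hw0)
    -- pointwise identity on the sphere
    have hzsph_ne : ∀ z ∈ Metric.sphere c R, z ≠ z₀ := by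
      intro z hz h
      subst h
      rw [mem_sphere] at hz
      rw [mem_ball, hz] at hz₀b
      exact lt_irrefl _ hz₀b
    have hptwise : ∀ z ∈ Metric.sphere c R,
        deriv f z / f z - (m : ℂ) / (z - z₀) = deriv g z / g z := by
      intro z hz
      have hzne : z - z₀ ≠ 0 := sub_ne_zero.mpr (hzsph_ne z hz)
      have hfz : f z ≠ 0 := hsph z hz
      have hgz : g z ≠ 0 := hgsph z hz
      have hd : HasDerivAt f ((↑m * (z - z₀) ^ (m - 1) * 1) * g z +
          (z - z₀) ^ m * deriv g z) z := by
        have h1 : HasDerivAt (fun w : ℂ => (w - z₀) ^ m)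
            (↑m * (z - z₀) ^ (m - 1) * 1) z := ((hasDerivAt_id z).sub_const z₀).pow m
        have h2 := h1.mul (hgd z).hasDerivAt
        have : f = fun w => (w - z₀) ^ m * g w := funext hfact
        rw [this]
        exact h2
      rw [hd.deriv, hfact z]
      rcases m with _ | j
      · simp
      · have hj : (j + 1 : ℕ) - 1 = j := rfl
        rw [hj]
        have hzp : (z - z₀) ^ (j + 1) ≠ 0 := pow_ne_zero _ hzne
        field_simp
        ring
    have hcint_f : CircleIntegrable (fun z => deriv f z / f z) c R := by
      refine ContinuousOn.circleIntegrable hR.le ?_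
      exact ((aux_deriv_entire hf).continuous.continuousOn).div
        (hf.continuous.continuousOn) hsph
    have hcint_1 : CircleIntegrable (fun z => (m : ℂ) / (z - z₀)) c R := by
      refine ContinuousOn.circleIntegrable hR.le ?_
      exact continuousOn_const.div
        ((continuous_id.sub continuous_const).continuousOn)
        (fun z hz => sub_ne_zero.mpr (hzsph_ne z hz))
    have hsplit : (∮ z in C(c, R), deriv f z / f z) -
        (∮ z in C(c, R), (m : ℂ) / (z - z₀)) = ∮ z in C(c, R), deriv g z / g z := by
      rw [← circleIntegral.integral_sub hcint_f hcint_1]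
      exact circleIntegral.integral_congr hR.le (fun z hz => hptwise z hz)
    have hpole : (∮ z in C(c, R), (m : ℂ) / (z - z₀)) = 2 * π * Complex.I * m := by
      simp only [div_eq_mul_inv]
      rw [circleIntegral.integral_const_mul]
      rw [circleIntegral.integral_sub_inv_of_mem_ball hz₀b]
      ring
    refine ⟨(m : ℤ) + m', ?_⟩
    have : (∮ z in C(c, R), deriv f z / f z) =
        (2 * π * Complex.I * m) + 2 * π * Complex.I * m' := by
      rw [← hpole, ← hm']
      rw [← hsplit]
      ring
    rw [this]
    push_cast
    ring



noncomputable def detCMM (n : ℕ) :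
    ContinuousMultilinearMap ℂ (fun _ : Fin n => (Fin n → ℂ)) ℂ :=
  MultilinearMap.mkContinuous
    (Matrix.detRowAlternating : ((Fin n → ℂ) [⋀^Fin n]→ₗ[ℂ] ℂ)).toMultilinearMap
    (Nat.factorial n)
    (by
      intro m
      show ‖Matrix.det (Matrix.of m)‖ ≤ _
      rw [Matrix.det_apply]
      refine (norm_sum_le _ _).trans ?_
      have hterm : ∀ σ : Equiv.Perm (Fin n),
          ‖Equiv.Perm.sign σ • ∏ i, Matrix.of m (σ i) i‖ ≤ ∏ i, ‖m i‖ := by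
        intro σ
        have h1 : ‖Equiv.Perm.sign σ • ∏ i, Matrix.of m (σ i) i‖ =
            ‖∏ i, m (σ i) i‖ := by
          rcases Int.units_eq_one_or (Equiv.Perm.sign σ) with h | h <;>
            simp [h, Units.smul_def]
        rw [h1]
        calc ‖∏ i, m (σ i) i‖ = ∏ i, ‖m (σ i) i‖ := by
              simp [norm_prod]
          _ ≤ ∏ i, ‖m (σ i)‖ := by
              refine Finset.prod_le_prod (fun i _ => norm_nonneg _) ?_
              exact fun i _ => norm_le_pi_norm (m (σ i)) i
          _ = ∏ i, ‖m i‖ := Equiv.prod_comp σ (fun i => ‖m i‖)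
      refine (Finset.sum_le_card_nsmul _ _ _ (fun σ _ => hterm σ)).trans ?_
      rw [nsmul_eq_mul, Finset.card_univ, Fintype.card_perm, Fintype.card_fin])

lemma detCMM_apply {n : ℕ} (m : Fin n → (Fin n → ℂ)) :
    detCMM n m = Matrix.det (Matrix.of m) := rfl

theorem jacobi_formula {n : ℕ} {M : ℂ → Matrix (Fin n) (Fin n) ℂ}
    {M' : Matrix (Fin n) (Fin n) ℂ} {z : ℂ}
    (h : ∀ i j, HasDerivAt (fun w => M w i j) (M' i j) z) :
    HasDerivAt (fun w => (M w).det) ((Matrix.adjugate (M z) * M').trace) z := by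
  classical
  have hG : HasDerivAt (fun w => (fun i => M w i)) (fun i => M' i) z :=
    hasDerivAt_pi.mpr fun i => hasDerivAt_pi.mpr fun j => h i j
  have hD := (detCMM n).hasFDerivAt (fun i => M z i)
  have hcomp := hD.comp_hasDerivAt z hG
  have hval : ((detCMM n).linearDeriv (fun i => M z i)) (fun i => M' i) =
      (Matrix.adjugate (M z) * M').trace := by
    rw [ContinuousMultilinearMap.linearDeriv_apply]
    have hstep : ∀ i, detCMM n (Function.update (fun i => M z i) i (M' i)) =
        ∑ j, Matrix.adjugate (M z) j i * M' i j := by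
      intro i
      have h1 : detCMM n (Function.update (fun i => M z i) i (M' i)) =
          Matrix.det ((M z).updateRow i (M' i)) := rfl
      rw [h1, ← Matrix.cramer_transpose_apply, Matrix.cramer_eq_adjugate_mulVec]
      simp [Matrix.mulVec, dotProduct, ← Matrix.adjugate_transpose,
        Matrix.transpose_apply]
    rw [Finset.sum_congr rfl (fun i _ => hstep i)]
    rw [Matrix.trace]
    rw [Finset.sum_comm]
    simp [Matrix.diag, Matrix.mul_apply]
  exact hval ▸ hcomp



private lemma ringHom_ringInverse {R S : Type*} [MonoidWithZero R] [MonoidWithZero S]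
    (φ : R →* S) {a : R} (h : IsUnit a) : φ (Ring.inverse a) = Ring.inverse (φ a) := by
  obtain ⟨u, rfl⟩ := h
  rw [Ring.inverse_unit, show φ ↑u = ↑(Units.map φ u) from rfl,
    Ring.inverse_unit (Units.map φ u), ← Units.coe_map_inv]

/-- Operator-valued logarithmic residue theorem (Gohberg–Sigal): if `F` is an entire
operator-valued function (here on a finite-dimensional Hilbert space, where every
operator is finite rank and has a trace), invertible on a contour enclosing its finitely
many non-invertibility points, then `(1/2πi)·tr ∮ F(λ)⁻¹ F′(λ) dλ` is an integer. -/
theorem stmt14 {H : Type*} [NormedAddCommGroup H] [InnerProductSpace ℂ H]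
    [FiniteDimensional ℂ H]
    (F : ℂ → (H →L[ℂ] H)) (hF : Differentiable ℂ F)
    (c : ℂ) (R : ℝ) (hR : 0 < R)
    (hinv : ∀ lam ∈ Metric.sphere c R, IsUnit (F lam))
    (hfin : {lam ∈ Metric.ball c R | ¬ IsUnit (F lam)}.Finite) :
    ∃ m : ℤ,
      (∮ lam in C(c, R),
        LinearMap.trace ℂ H ((Ring.inverse (F lam) ∘L deriv F lam : H →L[ℂ] H) : H →ₗ[ℂ] H))
        = 2 * π * Complex.I * m := by
  classical
  set n := Module.finrank ℂ H with hn
  let b : Module.Basis (Fin n) ℂ H := Module.finBasis ℂ H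
  let φ : (H →L[ℂ] H) →+* Matrix (Fin n) (Fin n) ℂ :=
    ((LinearMap.toMatrixAlgEquiv b).toAlgHom.toRingHom).comp
      (ContinuousLinearMap.toLinearMapRingHom)
  have hφ : ∀ A : H →L[ℂ] H, φ A = LinearMap.toMatrixAlgEquiv b (A : H →ₗ[ℂ] H) := fun _ => rfl
  set Mz : ℂ → Matrix (Fin n) (Fin n) ℂ := fun w => φ (F w) with hMz
  set f : ℂ → ℂ := fun w => (Mz w).det with hfdef
  -- derivative of f
  have hder : ∀ z : ℂ, HasDerivAt f ((Matrix.adjugate (Mz z) * φ (deriv F z)).trace) z := by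
    intro z
    apply jacobi_formula
    intro i j
    have hFz : HasDerivAt F (deriv F z) z := (hF z).hasDerivAt
    let ev : (H →L[ℂ] H) →L[ℂ] H := ContinuousLinearMap.apply ℂ H (b j)
    let coord : H →L[ℂ] ℂ := LinearMap.toContinuousLinearMap (b.coord i)
    have h1 : HasDerivAt (fun w => coord (ev (F w))) (coord (ev (deriv F z))) z :=
      (coord.hasFDerivAt.comp _ ev.hasFDerivAt).comp_hasDerivAt z hFz
    have he : ∀ A : H →L[ℂ] H, coord (ev A) = φ A i j := by
      intro A
      rw [hφ, LinearMap.toMatrixAlgEquiv_apply]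
      simp [coord, ev, Module.Basis.coord_apply]
    have hfun : (fun w => Mz w i j) = fun w => coord (ev (F w)) := by
      funext w; rw [he]
    have h2 : HasDerivAt (fun w => Mz w i j) (coord (ev (deriv F z))) z := hfun ▸ h1
    rw [← he (deriv F z)]
    exact h2
  have hfd : Differentiable ℂ f := fun z => (hder z).differentiableAt
  -- unit ↔ det ≠ 0
  have hunit : ∀ w : ℂ, IsUnit (F w) ↔ f w ≠ 0 := by
    intro w
    constructor
    · intro h
      have h2 := (Matrix.isUnit_iff_isUnit_det _).mp (h.map φ)
      exact h2.ne_zero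
    · intro h
      have hM : IsUnit (Mz w) := (Matrix.isUnit_iff_isUnit_det _).mpr (isUnit_iff_ne_zero.mpr h)
      have hL : IsUnit ((F w : H →ₗ[ℂ] H)) := by
        have h3 := hM.map (LinearMap.toMatrixAlgEquiv b).symm.toAlgHom.toRingHom
        have h4 : (LinearMap.toMatrixAlgEquiv b).symm (Mz w) = (F w : H →ₗ[ℂ] H) := by
          show (LinearMap.toMatrixAlgEquiv b).symm (φ (F w)) = (F w : H →ₗ[ℂ] H)
          rw [hφ]
          exact AlgEquiv.symm_apply_apply _ _
        rwa [show (LinearMap.toMatrixAlgEquiv b).symm.toAlgHom.toRingHom (Mz w) =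
          (LinearMap.toMatrixAlgEquiv b).symm (Mz w) from rfl, h4] at h3
      have hbij : Function.Bijective (F w) := (Module.End.isUnit_iff _).mp hL
      let e := LinearEquiv.ofBijective (F w : H →ₗ[ℂ] H) hbij
      let E := e.toContinuousLinearEquiv
      exact ⟨E.toUnit, by ext x; rfl⟩
  -- pointwise identity on the sphere
  have hptwise : ∀ z ∈ Metric.sphere c R,
      LinearMap.trace ℂ H ((Ring.inverse (F z) ∘L deriv F z : H →L[ℂ] H) : H →ₗ[ℂ] H)
        = deriv f z / f z := by
    intro z hz
    have hu : IsUnit (F z) := hinv z hz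
    have hfz : f z ≠ 0 := (hunit z).mp hu
    have h1 : LinearMap.trace ℂ H ((Ring.inverse (F z) ∘L deriv F z : H →L[ℂ] H) : H →ₗ[ℂ] H)
        = Matrix.trace (φ (Ring.inverse (F z) ∘L deriv F z)) := by
      rw [LinearMap.trace_eq_matrix_trace ℂ b]
      rfl
    have h2 : φ (Ring.inverse (F z) ∘L deriv F z) = Ring.inverse (Mz z) * φ (deriv F z) := by
      have hcm : Ring.inverse (F z) ∘L deriv F z = Ring.inverse (F z) * deriv F z := rfl
      rw [hcm, map_mul]
      congr 1
      exact ringHom_ringInverse φ.toMonoidHom hu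
    have hadj : Matrix.adjugate (Mz z) = f z • (Mz z)⁻¹ := by
      rw [Matrix.inv_def, Ring.inverse_eq_inv, smul_smul, mul_inv_cancel₀ hfz, one_smul]
    have hdf : deriv f z = f z * Matrix.trace (Ring.inverse (Mz z) * φ (deriv F z)) := by
      rw [(hder z).deriv, hadj, ← Matrix.nonsing_inv_eq_ringInverse, Matrix.smul_mul,
        Matrix.trace_smul, smul_eq_mul]
    rw [h1, h2, eq_div_iff hfz, hdf]
    ring
  -- the finite zero set
  let Z : Finset ℂ := hfin.toFinset
  have hZb : ↑Z ⊆ Metric.ball c R := by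
    intro z hz
    rw [Set.Finite.coe_toFinset] at hz
    exact hz.1
  have hZ : ∀ z ∈ Metric.closedBall c R, f z = 0 → z ∈ Z := by
    intro z hzc hz0
    have hnu : ¬ IsUnit (F z) := fun h => (hunit z).mp h hz0
    rw [Set.Finite.mem_toFinset]
    refine ⟨?_, hnu⟩
    rcases lt_or_eq_of_le (mem_closedBall.mp hzc) with h | h
    · exact mem_ball.mpr h
    · exact absurd (hinv z (mem_sphere.mpr h)) hnu
  have hsph : ∀ z ∈ Metric.sphere c R, f z ≠ 0 := fun z hz => (hunit z).mp (hinv z hz)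
  obtain ⟨m, hm⟩ := aux_arg_principle c R hR Z.card Z le_rfl f hfd hsph hZb hZ
  refine ⟨m, ?_⟩
  rw [← hm]
  exact circleIntegral.integral_congr hR.le (fun z hz => hptwise z hz)
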